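/- For every q ∈ {1,2} and every z ∈ S² with z ≠ (0,0,1) at which the manifold differential (mfderiv) of the warped cost φ̃_q := φ∘S_q vanishes, there exists p ∈ {1,2} with φ̃_q(z) − φ̃_p(z) ≥ 1/4. Consequently, for every δ with 0 < δ < 1/4, the family {S₁, S₂} is a δ-gap synergistic family adapted to φ. -/

import Mathlib

open scoped Manifold

instance : Fact (Module.finrank ℝ (EuclideanSpace ℝ (Fin 3)) = 2 + 1) :=
  ⟨finrank_euclideanSpace_fin⟩

/-- Application of a `3 × 3` real matrix to a vector of Euclidean 3-space by
matrix-vector multiplication. -/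
noncomputable def matApp3 (A : Matrix (Fin 3) (Fin 3) ℝ)
    (z : EuclideanSpace ℝ (Fin 3)) : EuclideanSpace ℝ (Fin 3) :=
  Matrix.toEuclideanLin A z

/-- The cost `φ(z) = 1 − z₃` on the ambient space `ℝ³`. -/
noncomputable def phiAmb3 (w : EuclideanSpace ℝ (Fin 3)) : ℝ := 1 - w 2

/-- The cross-product matrix `[u]×` of `u = (0, 1, 0)`, so `[u]× z = u × z`. -/
noncomputable def uCross : Matrix (Fin 3) (Fin 3) ℝ := !![0, 0, 1; 0, 0, 0; -1, 0, 0]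

/-- The gains `k₁ = 1/2`, `k₂ = −1/2`. -/
noncomputable def kGain3 : Fin 2 → ℝ := ![1 / 2, -(1 / 2)]

/-- The warping map `S_q` (with `γ = 1` and `α(r) = r²`): `S_q(z) = z` if `φ(z) ≤ 1`,
and `S_q(z) = exp(k_q·(φ(z)−1)²·[u]×)·z` otherwise; it preserves the unit sphere since
`[u]×` is skew-symmetric. -/
noncomputable def SWarp3 (q : Fin 2) (w : EuclideanSpace ℝ (Fin 3)) :
    EuclideanSpace ℝ (Fin 3) :=
  if phiAmb3 w ≤ 1 then w
  else matApp3 (NormedSpace.exp ((kGain3 q * (phiAmb3 w - 1) ^ 2) • uCross)) w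

/-- The warped cost `φ̃_q = φ ∘ S_q` as a function on the unit sphere `S²`. -/
noncomputable def phiWarp3 (q : Fin 2)
    (z : Metric.sphere (0 : EuclideanSpace ℝ (Fin 3)) 1) : ℝ :=
  phiAmb3 (SWarp3 q (z : EuclideanSpace ℝ (Fin 3)))

/-- The minimizer `(0, 0, 1)` of `φ` on the sphere. -/
noncomputable def northPole3 : EuclideanSpace ℝ (Fin 3) :=
  (WithLp.equiv 2 (Fin 3 → ℝ)).symm ![0, 0, 1]

/-! On the half-space `z₃ ≥ 0` the warp is the identity, and the correction it makes below the
seam is of order `z₃²`, so `φ ∘ S_q` has ambient derivative `-dz₃` on the whole closed upper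
half-space; a critical point there is a point of the sphere whose normal is `e₃`, i.e. the north
pole. Below the seam `exp(θ [u]×)` is the rotation by `θ = k_q z₃²` about `u` (Rodrigues' formula,
as `[u]×³ = -[u]×`), so `φ̃_q = 1 + z₁ sin θ - z₃ cos θ`. Solving the Lagrange conditions gives
`z₂ = 0`, `z₁ = sin θ`, `z₃ = -cos θ`; as the other gain is `-k_q`, the gap is
`φ̃_q - φ̃_p = 2 z₁ sin θ = 2 sin² θ`, and `cos² |θ| = 2 |θ|` forces `|θ| > 2/5`, hence
`2 sin² θ > 1/4`. -/

open scoped RealInnerProductSpace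
open Real Module Metric

section Rodrigues

variable {𝔸 : Type*} [NormedRing 𝔸] [NormedAlgebra ℝ 𝔸] [CompleteSpace 𝔸] {K : 𝔸}

theorem exp_smul_eq_of_mul_mul_self_eq_neg (hK : K * K * K = -K) (θ : ℝ) :
    NormedSpace.exp (θ • K) = 1 + sin θ • K + (1 - cos θ) • (K * K) := by
  set R : ℝ → 𝔸 := fun t ↦ 1 + sin t • K + (1 - cos t) • (K * K)
  have hR : ∀ t, HasDerivAt R (K * R t) t := by
    intro t
    refine ((((hasDerivAt_sin t).smul_const K).const_add 1).add
      (((hasDerivAt_cos t).const_sub 1).smul_const (K * K))).congr_deriv ?_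
    simp only [R, mul_add, mul_one, mul_smul_comm, ← mul_assoc, hK]
    module
  -- `R` solves `R' = K R` with `R 0 = 1`, so `exp (-t K) * R t` has zero derivative
  have hconst : ∀ t, NormedSpace.exp ((-t) • K) * R t = 1 := by
    have hd : ∀ t, HasDerivAt (fun s ↦ NormedSpace.exp ((-s) • K) * R s) 0 t := by
      intro t
      have he := (hasDerivAt_exp_smul_const' (𝕂 := ℝ) K (-t)).scomp t (hasDerivAt_neg t)
      refine (he.mul (hR t)).congr_deriv ?_
      rw [← mul_assoc, ((Commute.refl K).smul_right (-t)).exp_right.eq]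
      simp
    intro t
    simpa [R] using is_const_of_deriv_eq_zero (fun s ↦ (hd s).differentiableAt)
      (fun s ↦ (hd s).deriv) t 0
  have hball : ∀ x : 𝔸, x ∈ eball 0 (NormedSpace.expSeries ℝ 𝔸).radius := fun x ↦
    (NormedSpace.expSeries_radius_eq_top ℝ 𝔸).symm ▸ edist_lt_top _ _
  calc NormedSpace.exp (θ • K)
      = NormedSpace.exp (θ • K) * (NormedSpace.exp ((-θ) • K) * R θ) := by rw [hconst, mul_one]
    _ = R θ := by
      rw [← mul_assoc, ← NormedSpace.exp_add_of_commute_of_mem_ball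
        (((Commute.refl K).smul_right _).smul_left _) (hball _) (hball _)]
      simp

end Rodrigues

section Sphere

variable {E : Type*} [NormedAddCommGroup E] [InnerProductSpace ℝ E]

theorem ContinuousLinearMap.apply_eq_mul_inner_of_forall_orthogonal {L : E →L[ℝ] ℝ} {z : E}
    (hz : ‖z‖ = 1) (hL : ∀ v ∈ (ℝ ∙ z)ᗮ, L v = 0) (v : E) : L v = L z * ⟪z, v⟫ := by
  have hperp : v - ⟪z, v⟫ • z ∈ (ℝ ∙ z)ᗮ := by
    rw [Submodule.mem_orthogonal_singleton_iff_inner_right, inner_sub_right, inner_smul_right,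
      real_inner_self_eq_norm_sq, hz]
    ring
  have := hL _ hperp
  rw [map_sub, map_smul, smul_eq_mul] at this
  linarith

variable {n : ℕ} [Fact (finrank ℝ E = n + 1)]

theorem HasFDerivAt.apply_eq_zero_of_mfderiv_comp_coe_sphere_eq_zero {f : E → ℝ}
    {L : E →L[ℝ] ℝ} {z : sphere (0 : E) 1} (hf : HasFDerivAt f L z)
    (h0 : mfderiv (𝓡 n) 𝓘(ℝ, ℝ) (f ∘ (↑)) z = 0) {v : E} (hv : v ∈ (ℝ ∙ (z : E))ᗮ) :
    L v = 0 := by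
  have hcoe := (contMDiff_coe_sphere (n := n) (m := 1) z).mdifferentiableAt one_ne_zero
  rw [← range_mvfderiv_subtypeVal (n := n) z] at hv
  obtain ⟨u, rfl⟩ := hv
  have := (hf.hasMFDerivAt.comp z hcoe.hasMFDerivAt).mfderiv
  rw [h0] at this
  exact (congrArg (· u) this).symm

theorem HasFDerivAt.exists_eq_mul_inner_of_mfderiv_comp_coe_sphere_eq_zero {f : E → ℝ}
    {L : E →L[ℝ] ℝ} {z : sphere (0 : E) 1} (hf : HasFDerivAt f L z)
    (h0 : mfderiv (𝓡 n) 𝓘(ℝ, ℝ) (f ∘ (↑)) z = 0) : ∃ μ : ℝ, ∀ v, L v = μ * ⟪(z : E), v⟫ :=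
  ⟨L z, L.apply_eq_mul_inner_of_forall_orthogonal (norm_eq_of_mem_sphere z)
    (fun _ ↦ hf.apply_eq_zero_of_mfderiv_comp_coe_sphere_eq_zero h0)⟩

end Sphere

attribute [local instance] Matrix.linftyOpNormedRing Matrix.linftyOpNormedAlgebra

theorem uCross_mul_uCross_mul_uCross : uCross * uCross * uCross = -uCross := by
  ext i j
  fin_cases i <;> fin_cases j <;> simp [uCross, Matrix.mul_apply, Fin.sum_univ_three]

theorem exp_smul_uCross (θ : ℝ) :
    NormedSpace.exp (θ • uCross) = 1 + sin θ • uCross + (1 - cos θ) • (uCross * uCross) :=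
  exp_smul_eq_of_mul_mul_self_eq_neg uCross_mul_uCross_mul_uCross θ

theorem matApp3_exp_smul_uCross_apply_two (θ : ℝ) (w : EuclideanSpace ℝ (Fin 3)) :
    matApp3 (NormedSpace.exp (θ • uCross)) w 2 = cos θ * w 2 - sin θ * w 0 := by
  rw [exp_smul_uCross]
  simp [matApp3, uCross, Matrix.mulVec, dotProduct, Fin.sum_univ_three]
  ring

theorem kGain3_rev (q : Fin 2) : kGain3 q.rev = -kGain3 q := by
  fin_cases q <;> simp [kGain3]

theorem abs_kGain3 (q : Fin 2) : |kGain3 q| = 1 / 2 := by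
  fin_cases q <;> simp [kGain3]

/-- The closed form of `φ ∘ S_q` on the half-space `w 2 ≤ 0`, for the gain `k = k_q`. -/
noncomputable def tiltedCost (k : ℝ) (w : EuclideanSpace ℝ (Fin 3)) : ℝ :=
  1 + w 0 * sin (k * w 2 ^ 2) - w 2 * cos (k * w 2 ^ 2)

theorem tiltedCost_sub_tiltedCost_neg (k : ℝ) (w : EuclideanSpace ℝ (Fin 3)) :
    tiltedCost k w - tiltedCost (-k) w = 2 * w 0 * sin (k * w 2 ^ 2) := by
  simp only [tiltedCost, neg_mul, sin_neg, cos_neg]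
  ring

theorem hasFDerivAt_tiltedCost (k : ℝ) (z : EuclideanSpace ℝ (Fin 3)) :
    HasFDerivAt (tiltedCost k)
      (sin (k * z 2 ^ 2) • EuclideanSpace.proj (𝕜 := ℝ) 0 +
        (2 * k * z 2 * (z 0 * cos (k * z 2 ^ 2) + z 2 * sin (k * z 2 ^ 2)) - cos (k * z 2 ^ 2)) •
          EuclideanSpace.proj (𝕜 := ℝ) 2) z := by
  have h0 := (EuclideanSpace.proj 0 : StrongDual ℝ (EuclideanSpace ℝ (Fin 3))).hasFDerivAt (x := z)
  have h2 := (EuclideanSpace.proj 2 : StrongDual ℝ (EuclideanSpace ℝ (Fin 3))).hasFDerivAt (x := z)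
  have hθ := (h2.pow 2).const_mul k
  refine ((((h0.mul ((hasDerivAt_sin _).comp_hasFDerivAt z hθ)).const_add 1).sub
    (h2.mul ((hasDerivAt_cos _).comp_hasFDerivAt z hθ)))).congr_fderiv ?_
  ext v
  simp
  ring

theorem hasFDerivAt_phiAmb3 (z : EuclideanSpace ℝ (Fin 3)) :
    HasFDerivAt phiAmb3 (-EuclideanSpace.proj (𝕜 := ℝ) 2) z :=
  (EuclideanSpace.proj 2 : StrongDual ℝ (EuclideanSpace ℝ (Fin 3))).hasFDerivAt.const_sub 1

variable {q : Fin 2} {w : EuclideanSpace ℝ (Fin 3)}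

theorem SWarp3_of_nonneg (hw : 0 ≤ w 2) : SWarp3 q w = w :=
  if_pos (by unfold phiAmb3; linarith)

theorem phiAmb3_SWarp3_of_nonpos (hw : w 2 ≤ 0) :
    phiAmb3 (SWarp3 q w) = tiltedCost (kGain3 q) w := by
  rcases hw.lt_or_eq with hw | hw
  · have h : phiAmb3 w - 1 = -w 2 := by unfold phiAmb3; ring
    rw [SWarp3, if_neg (by linarith), h, neg_sq, phiAmb3, matApp3_exp_smul_uCross_apply_two,
      tiltedCost]
    ring
  · rw [SWarp3_of_nonneg hw.ge, tiltedCost, phiAmb3, hw]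
    simp

theorem hasFDerivAt_phiAmb3_comp_SWarp3_of_neg {z : EuclideanSpace ℝ (Fin 3)} (hz : z 2 < 0) :
    HasFDerivAt (phiAmb3 ∘ SWarp3 q)
      (sin (kGain3 q * z 2 ^ 2) • EuclideanSpace.proj (𝕜 := ℝ) 0 +
        (2 * kGain3 q * z 2 * (z 0 * cos (kGain3 q * z 2 ^ 2) + z 2 * sin (kGain3 q * z 2 ^ 2)) -
          cos (kGain3 q * z 2 ^ 2)) • EuclideanSpace.proj (𝕜 := ℝ) 2) z := by
  refine (hasFDerivAt_tiltedCost _ z).congr_of_eventuallyEq ?_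
  filter_upwards [(isOpen_lt (PiLp.continuous_apply 2 _ 2) continuous_const).mem_nhds hz]
    with w hw
  exact phiAmb3_SWarp3_of_nonpos hw.le

theorem hasFDerivAt_phiAmb3_comp_SWarp3_of_nonneg {z : EuclideanSpace ℝ (Fin 3)}
    (hz : 0 ≤ z 2) : HasFDerivAt (phiAmb3 ∘ SWarp3 q) (-EuclideanSpace.proj (𝕜 := ℝ) 2) z := by
  have hupper : HasFDerivWithinAt (phiAmb3 ∘ SWarp3 q) (-EuclideanSpace.proj (𝕜 := ℝ) 2)
      {w | 0 ≤ w 2} z :=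
    (hasFDerivAt_phiAmb3 z).hasFDerivWithinAt.congr
      (fun w hw ↦ congrArg phiAmb3 (SWarp3_of_nonneg hw)) (congrArg phiAmb3 (SWarp3_of_nonneg hz))
  -- below the seam the derivative of `tiltedCost` at `z 2 = 0` is again `-dz₃`
  have hlower : HasFDerivWithinAt (phiAmb3 ∘ SWarp3 q) (-EuclideanSpace.proj (𝕜 := ℝ) 2)
      {w | w 2 ≤ 0} z := by
    rcases hz.lt_or_eq with hz | hz
    · refine HasFDerivWithinAt.of_notMem_closure ?_
      rw [(isClosed_le (PiLp.continuous_apply 2 _ 2) continuous_const).closure_eq]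
      exact not_le.2 hz
    · refine ((hasFDerivAt_tiltedCost (kGain3 q) z).hasFDerivWithinAt.congr
        (fun w hw ↦ phiAmb3_SWarp3_of_nonpos hw) (phiAmb3_SWarp3_of_nonpos hz.ge)).congr_fderiv ?_
      ext v
      simp [← hz]
  have hcover : {w : EuclideanSpace ℝ (Fin 3) | 0 ≤ w 2} ∪ {w | w 2 ≤ 0} = Set.univ :=
    Set.eq_univ_of_forall fun w ↦ le_total 0 (w 2)
  simpa [hcover] using hupper.union hlower

theorem one_eighth_le_sin_sq_of_cos_sq_eq_two_mul_abs {θ : ℝ} (h : cos θ ^ 2 = 2 * |θ|) :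
    1 / 8 ≤ sin θ ^ 2 := by
  wlog hθ : 0 ≤ θ generalizing θ
  · simpa using this (θ := -θ) (by simpa using h) (by linarith)
  rw [abs_of_nonneg hθ] at h
  have hpyth := sin_sq_add_cos_sq θ
  -- `sin θ ≤ θ` and `cos θ ^ 2 ≤ 1` pin `θ` inside `(2/5, 1/2]`
  have hlow : 2 / 5 < θ := by nlinarith [sin_sq_le_sq (x := θ)]
  have hup : θ ≤ 1 / 2 := by nlinarith [sq_nonneg (sin θ)]
  have hcube : θ ^ 3 ≤ θ / 4 := by
    nlinarith [mul_le_mul_of_nonneg_left (show θ ^ 2 ≤ 1 / 4 by nlinarith) hθ]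
  have hsin : 23 / 60 < sin θ := by linarith [sin_gt_sub_cube (x := θ) (by linarith)]
  nlinarith

-- `h0`, `h1`, `h2` are the Lagrange conditions `∇ (tiltedCost k) (a, b, c) = μ • (a, b, c)`
theorem eq_sin_and_eq_neg_cos_of_lagrange {k a b c μ : ℝ} (hk : k ^ 2 = 1 / 4)
    (habc : a ^ 2 + b ^ 2 + c ^ 2 = 1) (hc : c < 0)
    (h0 : sin (k * c ^ 2) = μ * a) (h1 : 0 = μ * b)
    (h2 : 2 * k * c * (a * cos (k * c ^ 2) + c * sin (k * c ^ 2)) - cos (k * c ^ 2) = μ * c) :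
    a = sin (k * c ^ 2) ∧ c = -cos (k * c ^ 2) := by
  set θ := k * c ^ 2 with hθ
  have hc2 : c ^ 2 ≤ 1 := by nlinarith [sq_nonneg a, sq_nonneg b]
  have hθsq : θ ^ 2 < 1 := by
    rw [hθ, mul_pow, hk]; nlinarith [pow_le_one₀ (sq_nonneg c) hc2 (n := 2)]
  obtain ⟨hθl, hθu⟩ := abs_lt.1 ((sq_lt_one_iff_abs_lt_one θ).1 hθsq)
  have hπ := pi_gt_three
  have hs : sin θ ≠ 0 := by
    rw [Ne, sin_eq_zero_iff_of_lt_of_lt (by linarith) (by linarith), hθ]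
    exact mul_ne_zero (by rintro rfl; norm_num at hk) (pow_ne_zero 2 hc.ne)
  have hco : 0 < cos θ := cos_pos_of_mem_Ioo ⟨by linarith, by linarith⟩
  have hb : b = 0 := by
    have hμ : μ ≠ 0 := by rintro rfl; exact hs (by simpa using h0)
    simpa [hμ] using h1.symm
  have hac : a ^ 2 + c ^ 2 = 1 := by simpa [hb] using habc
  have hpyth := sin_sq_add_cos_sq θ
  have hG : a * cos θ + c * sin θ = 0 := by
    have hfac : (a * cos θ + c * sin θ) * (1 - 2 * k * a * c) = 0 := by
      linear_combination c * h0 - a * h2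
    have hkac : (2 * k * a * c) ^ 2 = a ^ 2 * c ^ 2 := by
      rw [mul_pow, mul_pow, mul_pow, hk]; ring
    have : 1 - 2 * k * a * c ≠ 0 := by nlinarith [sq_nonneg (a ^ 2 - c ^ 2)]
    simpa [this] using hfac
  -- `(a, c)` is a unit vector orthogonal to the unit vector `(cos θ, sin θ)`
  have hV : (a * sin θ - c * cos θ - 1) * (a * sin θ - c * cos θ + 1) = 0 := by
    linear_combination (-(a * cos θ + c * sin θ)) * hG + (sin θ ^ 2 + cos θ ^ 2) * hac + hpyth
  rcases mul_eq_zero.1 hV with hV | hV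
  · constructor
    · linear_combination sin θ * hV + cos θ * hG - a * hpyth
    · linear_combination (-cos θ) * hV + sin θ * hG - c * hpyth
  · have : c = cos θ := by linear_combination (-cos θ) * hV + sin θ * hG - c * hpyth
    linarith

theorem sq_add_sq_add_sq_of_mem_sphere {z : EuclideanSpace ℝ (Fin 3)} (hz : z ∈ sphere 0 1) :
    z 0 ^ 2 + z 1 ^ 2 + z 2 ^ 2 = 1 := by
  have := EuclideanSpace.real_norm_sq_eq z
  rw [mem_sphere_zero_iff_norm.1 hz] at this
  simpa [Fin.sum_univ_three] using this.symm

theorem eq_northPole3_of_mfderiv_phiWarp3_eq_zero {z : sphere (0 : EuclideanSpace ℝ (Fin 3)) 1}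
    (hz : 0 ≤ (z : EuclideanSpace ℝ (Fin 3)) 2)
    (h0 : mfderiv (𝓡 2) 𝓘(ℝ, ℝ) (phiWarp3 q) z = 0) :
    (z : EuclideanSpace ℝ (Fin 3)) = northPole3 := by
  obtain ⟨μ, hμ⟩ := (hasFDerivAt_phiAmb3_comp_SWarp3_of_nonneg (q := q) hz)
    |>.exists_eq_mul_inner_of_mfderiv_comp_coe_sphere_eq_zero h0
  have e0 := hμ (EuclideanSpace.single 0 1)
  have e1 := hμ (EuclideanSpace.single 1 1)
  have e2 := hμ (EuclideanSpace.single 2 1)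
  simp only [neg_apply, PiLp.proj_apply, PiLp.single_eq_same, PiLp.single_eq_of_ne, ne_eq,
    Fin.reduceEq, not_false_eq_true, neg_zero, EuclideanSpace.inner_single_right, conj_trivial,
    one_mul] at e0 e1 e2
  have hμ0 : μ ≠ 0 := by rintro rfl; norm_num at e2
  have ha : (z : EuclideanSpace ℝ (Fin 3)) 0 = 0 := by simpa [hμ0] using e0.symm
  have hb : (z : EuclideanSpace ℝ (Fin 3)) 1 = 0 := by simpa [hμ0] using e1.symm
  have hc : (z : EuclideanSpace ℝ (Fin 3)) 2 = 1 := by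
    have := sq_add_sq_add_sq_of_mem_sphere z.2
    rw [ha, hb] at this
    nlinarith
  ext i
  fin_cases i <;> simp [northPole3, ha, hb, hc]

theorem one_fourth_le_phiWarp3_sub_phiWarp3_rev {z : sphere (0 : EuclideanSpace ℝ (Fin 3)) 1}
    (hz : (z : EuclideanSpace ℝ (Fin 3)) 2 < 0)
    (h0 : mfderiv (𝓡 2) 𝓘(ℝ, ℝ) (phiWarp3 q) z = 0) :
    1 / 4 ≤ phiWarp3 q z - phiWarp3 q.rev z := by
  obtain ⟨μ, hμ⟩ := (hasFDerivAt_phiAmb3_comp_SWarp3_of_neg (q := q) hz)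
    |>.exists_eq_mul_inner_of_mfderiv_comp_coe_sphere_eq_zero h0
  have e0 := hμ (EuclideanSpace.single 0 1)
  have e1 := hμ (EuclideanSpace.single 1 1)
  have e2 := hμ (EuclideanSpace.single 2 1)
  simp only [add_apply, smul_apply, PiLp.proj_apply, PiLp.single_eq_same, PiLp.single_eq_of_ne,
    ne_eq, Fin.reduceEq, not_false_eq_true, smul_eq_mul, mul_one, mul_zero, add_zero, zero_add,
    EuclideanSpace.inner_single_right, conj_trivial, one_mul] at e0 e1 e2
  have hk : kGain3 q ^ 2 = 1 / 4 := by rw [← sq_abs, abs_kGain3]; norm_num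
  obtain ⟨ha, hc⟩ := eq_sin_and_eq_neg_cos_of_lagrange hk (sq_add_sq_add_sq_of_mem_sphere z.2) hz
    e0 e1 e2
  set c := (z : EuclideanSpace ℝ (Fin 3)) 2
  have hcos : cos (kGain3 q * c ^ 2) ^ 2 = 2 * |kGain3 q * c ^ 2| := by
    rw [abs_mul, abs_kGain3, abs_of_nonneg (sq_nonneg _)]
    linear_combination (cos (kGain3 q * c ^ 2) - c) * hc
  have := one_eighth_le_sin_sq_of_cos_sq_eq_two_mul_abs hcos
  simp only [phiWarp3, phiAmb3_SWarp3_of_nonpos hz.le, kGain3_rev, tiltedCost_sub_tiltedCost_neg]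
  rw [ha]
  linarith

theorem exists_one_fourth_le_phiWarp3_sub_of_mfderiv_eq_zero (q : Fin 2)
    (z : sphere (0 : EuclideanSpace ℝ (Fin 3)) 1) (hz : (z : EuclideanSpace ℝ (Fin 3)) ≠ northPole3)
    (h0 : mfderiv (𝓡 2) 𝓘(ℝ, ℝ) (phiWarp3 q) z = 0) :
    ∃ p : Fin 2, 1 / 4 ≤ phiWarp3 q z - phiWarp3 p z := by
  rcases lt_or_ge ((z : EuclideanSpace ℝ (Fin 3)) 2) 0 with hneg | hnonneg
  · exact ⟨q.rev, one_fourth_le_phiWarp3_sub_phiWarp3_rev hneg h0⟩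
  · exact absurd (eq_northPole3_of_mfderiv_phiWarp3_eq_zero hnonneg h0) hz

/-- For every `q ∈ {1,2}` and every `z ∈ S²` with `z ≠ (0,0,1)` at which
the manifold differential of the warped cost `φ̃_q = φ ∘ S_q` vanishes, there exists
`p ∈ {1,2}` with `φ̃_q(z) − φ̃_p(z) ≥ 1/4`. Consequently, for every `δ` with
`0 < δ < 1/4`, the family `{S₁, S₂}` is a `δ`-gap synergistic family adapted to `φ`. -/
theorem stmt16 :
    (∀ q : Fin 2, ∀ z : Metric.sphere (0 : EuclideanSpace ℝ (Fin 3)) 1,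
        (z : EuclideanSpace ℝ (Fin 3)) ≠ northPole3 →
        mfderiv (𝓡 2) 𝓘(ℝ, ℝ) (phiWarp3 q) z = 0 →
        ∃ p : Fin 2, 1 / 4 ≤ phiWarp3 q z - phiWarp3 p z) ∧
    (∀ δ : ℝ, 0 < δ → δ < 1 / 4 →
      ∀ q : Fin 2, ∀ z : Metric.sphere (0 : EuclideanSpace ℝ (Fin 3)) 1,
        (z : EuclideanSpace ℝ (Fin 3)) ≠ northPole3 →
        mfderiv (𝓡 2) 𝓘(ℝ, ℝ) (phiWarp3 q) z = 0 →
        ∃ p : Fin 2, phiWarp3 p z + δ < phiWarp3 q z) :=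
  ⟨exists_one_fourth_le_phiWarp3_sub_of_mfderiv_eq_zero, fun _ _ hδ q z hz h0 ↦
    (exists_one_fourth_le_phiWarp3_sub_of_mfderiv_eq_zero q z hz h0).imp fun _ hp ↦ by linarith⟩
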